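/- Let α be a simple multisegment and β any multisegment such that α ≤ β and α~ ≤ β~ (where ~ denotes the Zelevinsky involution). Then α = β. -/

import Mathlib

/-- A finite multiset of integer pairs `(b, e)` is a multisegment if each pair
satisfies `b ≤ e`; the pair `(b, e)` encodes the segment `{b, b+1, …, e}`. -/
def IsMultisegment (α : Multiset (ℤ × ℤ)) : Prop := ∀ p ∈ α, p.1 ≤ p.2

/-- The length `e - b + 1` of the segment `(b, e)`. -/
def segLen (p : ℤ × ℤ) : ℕ := (p.2 - p.1 + 1).toNat

/-- `L_α`: the maximal length of a segment of `α`. -/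
def maxLen (α : Multiset (ℤ × ℤ)) : ℕ := (α.map segLen).sup

/-- The union of the segments `p` and `q` is a segment strictly containing both. -/
def Linked (p q : ℤ × ℤ) : Prop :=
  q.1 ≤ p.2 + 1 ∧ p.1 ≤ q.2 + 1 ∧
    (min p.1 q.1, max p.2 q.2) ≠ p ∧ (min p.1 q.1, max p.2 q.2) ≠ q

/-- The intersection of two segments, as a multiset (empty if the segments are disjoint). -/
def interMS (p q : ℤ × ℤ) : Multiset (ℤ × ℤ) :=
  if max p.1 q.1 ≤ min p.2 q.2 then {(max p.1 q.1, min p.2 q.2)} else 0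

/-- An elementary operation replaces two segments whose union is a segment strictly
containing both by their union and (if nonempty) their intersection. -/
def ElemStep (α β : Multiset (ℤ × ℤ)) : Prop :=
  ∃ p q rest, α = p ::ₘ q ::ₘ rest ∧ Linked p q ∧
    β = (min p.1 q.1, max p.2 q.2) ::ₘ (interMS p q + rest)

/-- The partial order on multisegments: `α ≤ β` iff `β` is obtained from `α` by
a finite (possibly empty) sequence of elementary operations. -/
def msLE (α β : Multiset (ℤ × ℤ)) : Prop := Relation.ReflTransGen ElemStep α β

/-- Mœglin–Waldspurger: the chain `Δ_e, Δ_{e-1}, …, Δ_m` starting from `Δ`,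
where at each step we pass to a segment of `α` with end value one less, preceding
the current segment, and with maximal base value (fuel-driven recursion). -/
def mwChainAux : ℕ → Multiset (ℤ × ℤ) → ℤ × ℤ → List (ℤ × ℤ)
  | 0, _, Δ => [Δ]
  | n + 1, α, Δ =>
    let s := ((α.filter (fun p => p.2 = Δ.2 - 1 ∧ p.1 < Δ.1)).map Prod.fst).toFinset
    if h : s.Nonempty then Δ :: mwChainAux n α (s.max' h, Δ.2 - 1) else [Δ]

/-- The Mœglin–Waldspurger chain `Δ_e, Δ_{e-1}, …, Δ_m` of `α`: here `e` is the largest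
end value of a segment of `α` and `Δ_e` has maximal base value among segments with
end value `e`. -/
def mwChain (α : Multiset (ℤ × ℤ)) : List (ℤ × ℤ) :=
  let ends := (α.map Prod.snd).toFinset
  if h : ends.Nonempty then
    let e := ends.max' h
    let bases := ((α.filter (fun p => p.2 = e)).map Prod.fst).toFinset
    if hb : bases.Nonempty then mwChainAux α.card α (bases.max' hb, e) else []
  else []

/-- `M(α) = [m, e]`. -/
def mwSegment (α : Multiset (ℤ × ℤ)) : ℤ × ℤ :=
  (((mwChain α).getLastD (0, 0)).2, ((mwChain α).headD (0, 0)).2)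

/-- Delete the end value from a segment, discarding the segment if it becomes empty. -/
def mwShrink (p : ℤ × ℤ) : Multiset (ℤ × ℤ) :=
  if p.1 ≤ p.2 - 1 then {(p.1, p.2 - 1)} else 0

/-- `α ∖ M(α)`: delete the integer `i` from the segment `Δ_i` for each `m ≤ i ≤ e`. -/
def mwResidual (α : Multiset (ℤ × ℤ)) : Multiset (ℤ × ℤ) :=
  (α - ↑(mwChain α)) + (↑(mwChain α) : Multiset (ℤ × ℤ)).bind mwShrink

/-- The total number of integers occurring in the segments of `α` (with multiplicity). -/
def msSize (α : Multiset (ℤ × ℤ)) : ℕ := (α.map segLen).sum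

def tildeAux : ℕ → Multiset (ℤ × ℤ) → Multiset (ℤ × ℤ)
  | 0, _ => 0
  | n + 1, α => if α = 0 then 0 else mwSegment α ::ₘ tildeAux n (mwResidual α)

/-- The Zelevinsky involution `α ↦ α~`, computed by the Mœglin–Waldspurger algorithm:
`∅~ = ∅` and `α~ = {M(α)} ⊎ (α ∖ M(α))~`. -/
def tilde (α : Multiset (ℤ × ℤ)) : Multiset (ℤ × ℤ) := tildeAux (msSize α) α

/-- The simple multisegment `{[b, e], [b+1, e+1], …, [b+n-1, e+n-1]}`. -/
def simpleMS (b e : ℤ) (n : ℕ) : Multiset (ℤ × ℤ) :=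
  (Multiset.range n).map fun k => (b + (k : ℤ), e + (k : ℤ))

/-- A multisegment is simple if it has the form `{[b,e], [b+1,e+1], …, [b+n-1, e+n-1]}`
with `b ≤ e` and `n ≥ 1`. -/
def IsSimple (α : Multiset (ℤ × ℤ)) : Prop :=
  ∃ (b e : ℤ) (n : ℕ), b ≤ e ∧ 1 ≤ n ∧ α = simpleMS b e n

/-- The union `⋃_{Δ ∈ α} Δ` of the segments of `α`, as a set of integers. -/
def unionSet (α : Multiset (ℤ × ℤ)) : Set ℤ := {x | ∃ p ∈ α, p.1 ≤ x ∧ x ≤ p.2}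

/-- `c_α`: the minimal number of segments whose union is `⋃_{Δ ∈ α} Δ`. -/
noncomputable def cNum (α : Multiset (ℤ × ℤ)) : ℕ :=
  sInf {n | ∃ β : Multiset (ℤ × ℤ), IsMultisegment β ∧ β.card = n ∧ unionSet β = unionSet α}


/-!
Elementary operations never increase the number of segments and never shorten the longest
segment, while each step of the Mœglin–Waldspurger algorithm shortens every segment by at most
one, so `β~` has at least `L_β` segments. For simple `α` with segments of length `L`, `α~` has
exactly `L` segments, whereas an elementary operation on `α` merges two shifted segments into one
of length greater than `L`. Hence `α < β` would give `L < L_β ≤ #β~ ≤ #α~ = L`.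
-/

section Size

lemma one_le_segLen {p : ℤ × ℤ} (h : p.1 ≤ p.2) : 1 ≤ segLen p := by
  simp only [segLen]; omega

lemma msSize_add (γ δ : Multiset (ℤ × ℤ)) : msSize (γ + δ) = msSize γ + msSize δ := by
  simp [msSize]

lemma msSize_cons (p : ℤ × ℤ) (γ : Multiset (ℤ × ℤ)) :
    msSize (p ::ₘ γ) = segLen p + msSize γ := by
  simp [msSize]

lemma msSize_pos {γ : Multiset (ℤ × ℤ)} (hγ : IsMultisegment γ) (h0 : γ ≠ 0) :
    0 < msSize γ := by
  obtain ⟨p, hp⟩ := Multiset.exists_mem_of_ne_zero h0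
  obtain ⟨γ', rfl⟩ := Multiset.exists_cons_of_mem hp
  have := one_le_segLen (hγ p hp)
  rw [msSize_cons]; omega

lemma maxLen_le_iff {γ : Multiset (ℤ × ℤ)} {N : ℕ} : maxLen γ ≤ N ↔ ∀ p ∈ γ, segLen p ≤ N := by
  simp only [maxLen, Multiset.sup_le, Multiset.mem_map, forall_exists_index, and_imp,
    forall_apply_eq_imp_iff₂]

lemma segLen_le_maxLen {γ : Multiset (ℤ × ℤ)} {p : ℤ × ℤ} (hp : p ∈ γ) : segLen p ≤ maxLen γ :=
  Multiset.le_sup (Multiset.mem_map_of_mem _ hp)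

end Size

section Order

lemma card_le_of_elemStep {γ δ : Multiset (ℤ × ℤ)} (h : ElemStep γ δ) : δ.card ≤ γ.card := by
  obtain ⟨p, q, rest, rfl, -, rfl⟩ := h
  have : (interMS p q).card ≤ 1 := by unfold interMS; split <;> simp
  simp only [Multiset.card_cons, Multiset.card_add]
  omega

lemma card_le_of_msLE {γ δ : Multiset (ℤ × ℤ)} (h : msLE γ δ) : δ.card ≤ γ.card := by
  induction h with
  | refl => rfl
  | tail _ hstep ih => exact (card_le_of_elemStep hstep).trans ih

lemma maxLen_le_of_elemStep {γ δ : Multiset (ℤ × ℤ)} (h : ElemStep γ δ) :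
    maxLen γ ≤ maxLen δ := by
  obtain ⟨p, q, rest, rfl, -, rfl⟩ := h
  have hunion := segLen_le_maxLen (Multiset.mem_cons_self (min p.1 q.1, max p.2 q.2)
    (interMS p q + rest))
  simp only [segLen] at hunion
  refine maxLen_le_iff.2 fun r hr => ?_
  rcases Multiset.mem_cons.1 hr with rfl | hr
  · simp only [segLen]; omega
  rcases Multiset.mem_cons.1 hr with rfl | hr
  · simp only [segLen]; omega
  · exact segLen_le_maxLen (Multiset.mem_cons_of_mem (Multiset.mem_add.2 (Or.inr hr)))

lemma maxLen_le_of_msLE {γ δ : Multiset (ℤ × ℤ)} (h : msLE γ δ) : maxLen γ ≤ maxLen δ := by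
  induction h with
  | refl => rfl
  | tail _ hstep ih => exact ih.trans (maxLen_le_of_elemStep hstep)

end Order

section Chain

/-- The Mœglin–Waldspurger chain continues from `Δ` with the largest of these bases. -/
def predecessorBases (γ : Multiset (ℤ × ℤ)) (Δ : ℤ × ℤ) : Finset ℤ :=
  ((γ.filter (fun p => p.2 = Δ.2 - 1 ∧ p.1 < Δ.1)).map Prod.fst).toFinset

lemma mem_predecessorBases {γ : Multiset (ℤ × ℤ)} {Δ : ℤ × ℤ} {c : ℤ} :
    c ∈ predecessorBases γ Δ ↔ (c, Δ.2 - 1) ∈ γ ∧ c < Δ.1 := by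
  simp only [predecessorBases, Multiset.mem_toFinset, Multiset.mem_map, Multiset.mem_filter]
  constructor
  · rintro ⟨⟨c', d⟩, ⟨hmem, rfl, hlt⟩, rfl⟩
    exact ⟨hmem, hlt⟩
  · exact fun ⟨hmem, hlt⟩ => ⟨(c, Δ.2 - 1), ⟨hmem, rfl, hlt⟩, rfl⟩

lemma mwChainAux_succ (n : ℕ) (γ : Multiset (ℤ × ℤ)) (Δ : ℤ × ℤ) :
    mwChainAux (n + 1) γ Δ = if h : (predecessorBases γ Δ).Nonempty then
      Δ :: mwChainAux n γ ((predecessorBases γ Δ).max' h, Δ.2 - 1) else [Δ] :=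
  rfl

lemma mwChainAux_ne_nil (n : ℕ) (γ : Multiset (ℤ × ℤ)) (Δ : ℤ × ℤ) : mwChainAux n γ Δ ≠ [] := by
  cases n with
  | zero => simp [mwChainAux]
  | succ n => rw [mwChainAux_succ]; split <;> simp

lemma snd_le_of_mem_mwChainAux {γ : Multiset (ℤ × ℤ)} {n : ℕ} {Δ p : ℤ × ℤ}
    (hp : p ∈ mwChainAux n γ Δ) : p.2 ≤ Δ.2 := by
  induction n generalizing Δ with
  | zero => simp_all [mwChainAux]
  | succ n ih =>
    rw [mwChainAux_succ] at hp
    split at hp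
    · rcases List.mem_cons.1 hp with rfl | hp
      · exact le_rfl
      · have := ih hp; dsimp only at this; omega
    · simp_all

lemma coe_mwChainAux_le {γ : Multiset (ℤ × ℤ)} {Δ : ℤ × ℤ} (hΔ : Δ ∈ γ) (n : ℕ) :
    (mwChainAux n γ Δ : Multiset (ℤ × ℤ)) ≤ γ := by
  induction n generalizing Δ with
  | zero => simpa [mwChainAux] using hΔ
  | succ n ih =>
    rw [mwChainAux_succ]
    split
    · next h =>
      have hnext := (mem_predecessorBases.1 (Finset.max'_mem _ h)).1
      have hΔ_notMem : Δ ∉ mwChainAux n γ ((predecessorBases γ Δ).max' h, Δ.2 - 1) :=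
        fun hmem => by have := snd_le_of_mem_mwChainAux hmem; dsimp only at this; omega
      rw [← Multiset.cons_coe, Multiset.cons_le_of_notMem (by simpa using hΔ_notMem)]
      exact ⟨hΔ, ih hnext⟩
    · simpa using hΔ

lemma mwChain_eq_mwChainAux {γ : Multiset (ℤ × ℤ)} {Δ : ℤ × ℤ} (hΔ : Δ ∈ γ)
    (hend : ∀ q ∈ γ, q.2 ≤ Δ.2) (hbase : ∀ q ∈ γ, q.2 = Δ.2 → q.1 ≤ Δ.1) :
    mwChain γ = mwChainAux γ.card γ Δ := by
  have hends : ∃ h, (γ.map Prod.snd).toFinset.max' h = Δ.2 := by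
    have hmem : Δ.2 ∈ (γ.map Prod.snd).toFinset :=
      Multiset.mem_toFinset.2 (Multiset.mem_map_of_mem _ hΔ)
    refine ⟨⟨_, hmem⟩, (Finset.max'_eq_iff _ _ _).2 ⟨hmem, ?_⟩⟩
    simpa using fun b a hab => hend (a, b) hab
  obtain ⟨hne, he⟩ := hends
  have hbases : ∃ h, ((γ.filter (fun p => p.2 = Δ.2)).map Prod.fst).toFinset.max' h = Δ.1 := by
    have hmem : Δ.1 ∈ ((γ.filter (fun p => p.2 = Δ.2)).map Prod.fst).toFinset :=
      Multiset.mem_toFinset.2 (Multiset.mem_map_of_mem _ (Multiset.mem_filter.2 ⟨hΔ, rfl⟩))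
    refine ⟨⟨_, hmem⟩, (Finset.max'_eq_iff _ _ _).2 ⟨hmem, ?_⟩⟩
    simpa using fun a hab => hbase (a, Δ.2) hab rfl
  obtain ⟨hbne, hb⟩ := hbases
  simp only [mwChain, dif_pos hne, he, dif_pos hbne, hb]

lemma exists_mwChain_eq_mwChainAux {γ : Multiset (ℤ × ℤ)} (h0 : γ ≠ 0) :
    ∃ Δ ∈ γ, mwChain γ = mwChainAux γ.card γ Δ := by
  obtain ⟨Δ, hΔ, hmax⟩ := γ.toFinset.exists_max_image (fun p => toLex (p.2, p.1))
    (Multiset.toFinset_nonempty.2 h0)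
  refine ⟨Δ, by simpa using hΔ, mwChain_eq_mwChainAux (by simpa using hΔ) ?_ ?_⟩ <;>
  · intro q hq
    have := Prod.Lex.toLex_le_toLex.1 (hmax q (by simpa using hq))
    omega

lemma coe_mwChain_le {γ : Multiset (ℤ × ℤ)} (h0 : γ ≠ 0) : (mwChain γ : Multiset (ℤ × ℤ)) ≤ γ := by
  obtain ⟨Δ, hΔ, heq⟩ := exists_mwChain_eq_mwChainAux h0
  exact heq ▸ coe_mwChainAux_le hΔ _

lemma mwChain_ne_nil {γ : Multiset (ℤ × ℤ)} (h0 : γ ≠ 0) : mwChain γ ≠ [] := by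
  obtain ⟨Δ, -, heq⟩ := exists_mwChain_eq_mwChainAux h0
  exact heq ▸ mwChainAux_ne_nil _ _ _

end Chain

section Residual

lemma msSize_mwShrink_add_one {p : ℤ × ℤ} (hp : p.1 ≤ p.2) :
    msSize (mwShrink p) + 1 = segLen p := by
  unfold mwShrink
  split <;> simp [msSize, segLen] <;> omega

lemma msSize_bind_mwShrink_add_card {s : Multiset (ℤ × ℤ)} (hs : IsMultisegment s) :
    msSize (s.bind mwShrink) + s.card = msSize s := by
  induction s using Multiset.induction_on with
  | empty => rfl
  | cons p s ih =>
    have hp := msSize_mwShrink_add_one (hs p (Multiset.mem_cons_self p s))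
    have := ih fun q hq => hs q (Multiset.mem_cons_of_mem hq)
    rw [Multiset.cons_bind, msSize_add, msSize_cons, Multiset.card_cons]
    omega

lemma isMultisegment_mwResidual {γ : Multiset (ℤ × ℤ)} (hγ : IsMultisegment γ) :
    IsMultisegment (mwResidual γ) := by
  intro p hp
  rcases Multiset.mem_add.1 hp with hp | hp
  · exact hγ p (Multiset.mem_of_le tsub_le_self hp)
  · obtain ⟨a, -, hpa⟩ := Multiset.mem_bind.1 hp
    unfold mwShrink at hpa
    split at hpa
    · rwa [Multiset.mem_singleton.1 hpa]
    · simp at hpa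

lemma msSize_mwResidual_lt {γ : Multiset (ℤ × ℤ)} (hγ : IsMultisegment γ) (h0 : γ ≠ 0) :
    msSize (mwResidual γ) < msSize γ := by
  have hle := coe_mwChain_le h0
  have hshrink := msSize_bind_mwShrink_add_card fun p hp => hγ p (Multiset.mem_of_le hle hp)
  have hsplit : msSize (γ - mwChain γ) + msSize (mwChain γ) = msSize γ := by
    rw [← msSize_add, tsub_add_cancel_of_le hle]
  have hcard : 0 < (mwChain γ : Multiset (ℤ × ℤ)).card := by
    simpa [List.length_pos_iff] using mwChain_ne_nil h0
  rw [mwResidual, msSize_add]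
  omega

lemma maxLen_le_maxLen_mwResidual_add_one (γ : Multiset (ℤ × ℤ)) :
    maxLen γ ≤ maxLen (mwResidual γ) + 1 := by
  refine maxLen_le_iff.2 fun p hp => ?_
  by_cases hrest : p ∈ γ - mwChain γ
  · have := segLen_le_maxLen (γ := mwResidual γ) (Multiset.mem_add.2 (Or.inl hrest))
    omega
  have hchain : p ∈ (mwChain γ : Multiset (ℤ × ℤ)) := by
    rw [Multiset.mem_sub, not_lt] at hrest
    exact Multiset.count_pos.1 ((Multiset.count_pos.2 hp).trans_le hrest)
  by_cases hshort : p.1 ≤ p.2 - 1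
  · have hmem : (p.1, p.2 - 1) ∈ mwResidual γ := by
      refine Multiset.mem_add.2 (Or.inr (Multiset.mem_bind.2 ⟨p, hchain, ?_⟩))
      simp [mwShrink, hshort]
    have := segLen_le_maxLen hmem
    simp only [segLen] at this ⊢
    omega
  · simp only [segLen]; omega

end Residual

section Tilde

lemma tildeAux_zero (k : ℕ) : tildeAux k 0 = 0 := by
  cases k <;> simp [tildeAux]

lemma tildeAux_congr {k k' : ℕ} {γ : Multiset (ℤ × ℤ)} (hγ : IsMultisegment γ)
    (hk : msSize γ ≤ k) (hk' : msSize γ ≤ k') : tildeAux k γ = tildeAux k' γ := by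
  induction k generalizing k' γ with
  | zero =>
    obtain rfl : γ = 0 := by
      by_contra h0; have := msSize_pos hγ h0; omega
    rw [tildeAux_zero, tildeAux_zero]
  | succ k ih =>
    by_cases h0 : γ = 0
    · rw [h0, tildeAux_zero, tildeAux_zero]
    have hlt := msSize_mwResidual_lt hγ h0
    obtain ⟨k'', rfl⟩ : ∃ k'', k' = k'' + 1 := ⟨k' - 1, by omega⟩
    simp only [tildeAux, if_neg h0]
    rw [ih (k' := k'') (isMultisegment_mwResidual hγ) (by omega) (by omega)]

lemma tilde_eq_cons {γ : Multiset (ℤ × ℤ)} (hγ : IsMultisegment γ) (h0 : γ ≠ 0) :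
    tilde γ = mwSegment γ ::ₘ tilde (mwResidual γ) := by
  have hlt := msSize_mwResidual_lt hγ h0
  obtain ⟨k, hk⟩ : ∃ k, msSize γ = k + 1 := ⟨msSize γ - 1, by omega⟩
  rw [tilde, hk, tildeAux, if_neg h0, tilde,
    tildeAux_congr (isMultisegment_mwResidual hγ) (by omega) le_rfl]

theorem maxLen_le_card_tilde {γ : Multiset (ℤ × ℤ)} (hγ : IsMultisegment γ) :
    maxLen γ ≤ (tilde γ).card := by
  induction hsize : msSize γ using Nat.strong_induction_on generalizing γ with
  | _ N ih =>
    by_cases h0 : γ = 0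
    · subst h0; simp [maxLen]
    have := ih _ (hsize ▸ msSize_mwResidual_lt hγ h0) (isMultisegment_mwResidual hγ) rfl
    have := maxLen_le_maxLen_mwResidual_add_one γ
    rw [tilde_eq_cons hγ h0, Multiset.card_cons]
    omega

end Tilde

section Simple

variable {b e : ℤ}

lemma mem_simpleMS {n : ℕ} {p : ℤ × ℤ} :
    p ∈ simpleMS b e n ↔ ∃ k < n, (b + (k : ℤ), e + (k : ℤ)) = p := by
  simp [simpleMS]

lemma simpleMS_succ (n : ℕ) :
    simpleMS b e (n + 1) = (b + (n : ℤ), e + (n : ℤ)) ::ₘ simpleMS b e n := by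
  simp [simpleMS, Multiset.range_succ]

lemma isMultisegment_simpleMS (hbe : b ≤ e) (n : ℕ) : IsMultisegment (simpleMS b e n) := by
  intro p hp
  obtain ⟨k, -, rfl⟩ := mem_simpleMS.1 hp
  simpa using hbe

lemma simpleMS_ne_zero {n : ℕ} (hn : 0 < n) : simpleMS b e n ≠ 0 := by
  intro h
  simpa [simpleMS, hn.ne'] using congrArg Multiset.card h

lemma predecessorBases_simpleMS_zero (n : ℕ) : predecessorBases (simpleMS b e n) (b, e) = ∅ := by
  ext c
  simp only [mem_predecessorBases, mem_simpleMS, Prod.mk.injEq, Finset.notMem_empty, iff_false]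
  omega

lemma predecessorBases_simpleMS_succ {n j : ℕ} (hj : j < n) :
    predecessorBases (simpleMS b e n) (b + (j + 1 : ℕ), e + (j + 1 : ℕ)) = {b + j} := by
  ext c
  simp only [mem_predecessorBases, mem_simpleMS, Prod.mk.injEq, Finset.mem_singleton]
  constructor
  · rintro ⟨⟨k, -, hb, he⟩, -⟩; omega
  · rintro rfl; exact ⟨⟨j, hj, rfl, by push_cast; ring⟩, by push_cast; omega⟩

lemma coe_mwChainAux_simpleMS {n j f : ℕ} (hj : j < n) (hf : j ≤ f) :
    (mwChainAux f (simpleMS b e n) (b + j, e + j) : Multiset (ℤ × ℤ)) = simpleMS b e (j + 1) := by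
  induction j generalizing f with
  | zero =>
    cases f with
    | zero => simp [mwChainAux, simpleMS]
    | succ f =>
      simp only [Nat.cast_zero, add_zero]
      rw [mwChainAux_succ, predecessorBases_simpleMS_zero]
      simp [simpleMS]
  | succ j ih =>
    obtain ⟨f, rfl⟩ : ∃ f', f = f' + 1 := ⟨f - 1, by omega⟩
    have hend : e + ((j + 1 : ℕ) : ℤ) - 1 = e + j := by push_cast; ring
    rw [mwChainAux_succ, predecessorBases_simpleMS_succ (j := j) (by omega),
      dif_pos (Finset.singleton_nonempty _), Finset.max'_singleton, hend, ← Multiset.cons_coe, ih (by omega) (by omega), simpleMS_succ (j + 1)]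

lemma coe_mwChain_simpleMS {n : ℕ} (hn : 0 < n) :
    (mwChain (simpleMS b e n) : Multiset (ℤ × ℤ)) = simpleMS b e n := by
  have htop : ((b + (n - 1 : ℕ), e + (n - 1 : ℕ)) : ℤ × ℤ) ∈ simpleMS b e n :=
    mem_simpleMS.2 ⟨n - 1, by omega, rfl⟩
  rw [mwChain_eq_mwChainAux htop, coe_mwChainAux_simpleMS (by omega) (by simp [simpleMS]),
    Nat.sub_add_cancel hn]
  all_goals
    intro q hq
    obtain ⟨k, hk, rfl⟩ := mem_simpleMS.1 hq
    omega

lemma mwResidual_simpleMS {n : ℕ} (hn : 0 < n) :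
    mwResidual (simpleMS b e n) = (simpleMS b e n).bind mwShrink := by
  rw [mwResidual, coe_mwChain_simpleMS hn, tsub_self, zero_add]

lemma bind_mwShrink_simpleMS_of_lt (hbe : b < e) (n : ℕ) :
    (simpleMS b e n).bind mwShrink = simpleMS b (e - 1) n := by
  rw [simpleMS, Multiset.bind_map, simpleMS, ← Multiset.bind_singleton]
  refine Multiset.bind_congr fun k _ => ?_
  rw [mwShrink, if_pos (by omega)]
  congr 2
  ring

lemma bind_mwShrink_simpleMS_self (n : ℕ) : (simpleMS b b n).bind mwShrink = 0 := by
  refine Multiset.eq_zero_of_forall_notMem fun p hp => ?_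
  obtain ⟨a, ha, hpa⟩ := Multiset.mem_bind.1 hp
  obtain ⟨k, -, rfl⟩ := mem_simpleMS.1 ha
  simp [mwShrink] at hpa

/-- The chain of a simple `α` runs through all of its segments, so `α ∖ M(α)` is `α` with
every segment shortened by one. -/
theorem card_tilde_simpleMS {n : ℕ} (hn : 0 < n) (hbe : b ≤ e) :
    (tilde (simpleMS b e n)).card = (e - b).toNat + 1 := by
  induction hlen : (e - b).toNat generalizing e with
  | zero =>
    obtain rfl : e = b := by omega
    rw [tilde_eq_cons (isMultisegment_simpleMS hbe n) (simpleMS_ne_zero hn),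
      mwResidual_simpleMS hn, bind_mwShrink_simpleMS_self]
    rfl
  | succ m ih =>
    rw [tilde_eq_cons (isMultisegment_simpleMS hbe n) (simpleMS_ne_zero hn),
      mwResidual_simpleMS hn, bind_mwShrink_simpleMS_of_lt (by omega),
      Multiset.card_cons, ih (by omega) (by omega)]

end Simple

lemma le_maxLen_of_elemStep_simpleMS {b e : ℤ} {n : ℕ} {γ : Multiset (ℤ × ℤ)} (hbe : b ≤ e)
    (h : ElemStep (simpleMS b e n) γ) : (e - b).toNat + 2 ≤ maxLen γ := by
  obtain ⟨p, q, rest, hsplit, hlinked, rfl⟩ := h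
  have hp : p ∈ simpleMS b e n := hsplit ▸ Multiset.mem_cons_self _ _
  have hq : q ∈ simpleMS b e n := hsplit ▸ Multiset.mem_cons_of_mem (Multiset.mem_cons_self _ _)
  obtain ⟨i, -, rfl⟩ := mem_simpleMS.1 hp
  obtain ⟨j, -, rfl⟩ := mem_simpleMS.1 hq
  have hij : i ≠ j := by
    rintro rfl
    exact hlinked.2.2.1 (by simp)
  refine le_trans ?_ (segLen_le_maxLen (Multiset.mem_cons_self _ _))
  simp only [segLen]
  omega

/-- If `α` is simple, `α ≤ β` and `α~ ≤ β~`, then `α = β`. -/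
theorem eq_of_simple_of_msLE_of_tilde_msLE (α β : Multiset (ℤ × ℤ))
    (hα : IsSimple α) (hβ : IsMultisegment β)
    (h : msLE α β) (ht : msLE (tilde α) (tilde β)) :
    α = β := by
  obtain ⟨b, e, n, hbe, hn, rfl⟩ := hα
  rcases h.cases_head with rfl | ⟨γ, hstep, hγβ⟩
  · rfl
  have := calc
    (e - b).toNat + 2 ≤ maxLen γ := le_maxLen_of_elemStep_simpleMS hbe hstep
    _ ≤ maxLen β := maxLen_le_of_msLE hγβ
    _ ≤ (tilde β).card := maxLen_le_card_tilde hβ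
    _ ≤ (tilde (simpleMS b e n)).card := card_le_of_msLE ht
    _ = (e - b).toNat + 1 := card_tilde_simpleMS hn hbe
  omega
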